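/- Let T > 0 and let 0 = t_0 < t_1 < ... < t_N = T be a partition satisfying max_{0 ≤ i ≤ N-2} Δ_{i+1}/Δ_i ≤ R_π for some constant R_π ≥ 1, where Δ_j = t_{j+1} - t_j. For any α, β > 0 with α < 1 or β < 1, there exists a finite constant B(α,β) = (1 + R_π) · Beta(α,β) (with Beta the Euler beta integral ∫_0^1 (1-s)^{α-1} s^{β-1} ds) depending only on R_π, α, β, such that for all 0 ≤ i < k ≤ N: Σ_{j=i+1}^{k-1} Δ_j / ((t_k - t_j)^{1-α} (t_j - t_i)^{1-β}) ≤ B(α,β) (t_k - t_i)^{α+β-1}. -/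

import Mathlib

open Finset

/-!
Write `φ u = (b - u)^(α-1) (u - a)^(β-1)` with `a = t i`, `b = t k`; the sum is the left Riemann
sum `∑ Δ_j φ (t j)` over the interior nodes. Since `log φ` is convex when `α, β ≤ 1` and monotone
otherwise, `φ` is quasiconvex on `(a, b)`, so at every node `φ (t j)` is a lower bound for `φ`
either on everything to its right or on everything to its left. In the first case
`Δ_j φ (t j) ≤ ∫_{t j}^{t (j+1)} φ`; in the second, `Δ_j ≤ R Δ_{j-1}` gives
`Δ_j φ (t j) ≤ R ∫_{t (j-1)}^{t j} φ`. Summing yields `(1 + R) ∫_a^b φ`, and the substitution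
`u = a + (b - a) s` turns `∫_a^b φ` into `(b - a)^(α+β-1)` times the beta integral.
-/

open Real MeasureTheory

theorem QuasiconvexOn.forall_le_of_ge_or_forall_le_of_le {𝕜 β : Type*} [Field 𝕜] [LinearOrder 𝕜]
    [IsStrictOrderedRing 𝕜] [LinearOrder β] {s : Set 𝕜} {f : 𝕜 → β}
    (hf : QuasiconvexOn 𝕜 s f) (x : 𝕜) :
    (∀ y ∈ s, x ≤ y → f x ≤ f y) ∨ (∀ y ∈ s, y ≤ x → f x ≤ f y) := by
  by_contra! h
  obtain ⟨⟨y, hy, hxy, hfy⟩, ⟨z, hz, hzx, hfz⟩⟩ := h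
  have hsub := (convex_iff_ordConnected.mp (hf (max (f y) (f z)))).out
    ⟨hz, le_max_right _ _⟩ ⟨hy, le_max_left _ _⟩ ⟨hzx, hxy⟩
  exact (max_lt hfy hfz).not_ge hsub.2

section RiemannSum

variable {φ : ℝ → ℝ} {a b : ℝ}

theorem sub_mul_le_integral_add_mul_integral_of_quasiconvexOn
    (hφ : QuasiconvexOn ℝ (Set.Ioo a b) φ) (hφ0 : ∀ u ∈ Set.Icc a b, 0 ≤ φ u)
    (hint : IntervalIntegrable φ volume a b) {x y z R : ℝ} (hax : a ≤ x) (hxy : x ≤ y)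
    (hyz : y ≤ z) (hzb : z ≤ b) (hR : 0 ≤ R) (hratio : z - y ≤ R * (y - x)) :
    (z - y) * φ y ≤ (∫ u in y..z, φ u) + R * ∫ u in x..y, φ u := by
  have hint' : ∀ {c d}, a ≤ c → c ≤ d → d ≤ b → IntervalIntegrable φ volume c d :=
    fun hac hcd hdb => hint.mono_set <| by
      rw [Set.uIcc_of_le hcd, Set.uIcc_of_le (hac.trans (hcd.trans hdb))]
      exact Set.Icc_subset_Icc hac hdb
  have hnonneg : ∀ {c d}, a ≤ c → c ≤ d → d ≤ b → 0 ≤ ∫ u in c..d, φ u :=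
    fun hac hcd hdb => intervalIntegral.integral_nonneg hcd
      fun u hu => hφ0 u ⟨hac.trans hu.1, hu.2.trans hdb⟩
  have hlower : ∀ {c d}, a ≤ c → c ≤ d → d ≤ b → (∀ u ∈ Set.Ioo c d, φ y ≤ φ u) →
      (d - c) * φ y ≤ ∫ u in c..d, φ u := fun hac hcd hdb hle => by
    simpa using intervalIntegral.integral_mono_on_of_le_Ioo hcd intervalIntegrable_const
      (hint' hac hcd hdb) hle
  have hIxy := hnonneg hax hxy (hyz.trans hzb)
  have hIyz := hnonneg (hax.trans hxy) hyz hzb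
  rcases hφ.forall_le_of_ge_or_forall_le_of_le y with hright | hleft
  · calc (z - y) * φ y ≤ ∫ u in y..z, φ u :=
          hlower (hax.trans hxy) hyz hzb fun u hu =>
            hright u ⟨(hax.trans hxy).trans_lt hu.1, hu.2.trans_le hzb⟩ hu.1.le
      _ ≤ (∫ u in y..z, φ u) + R * ∫ u in x..y, φ u := le_add_of_nonneg_right (mul_nonneg hR hIxy)
  · calc (z - y) * φ y ≤ R * ((y - x) * φ y) := by
          rw [← mul_assoc]
          exact mul_le_mul_of_nonneg_right hratio (hφ0 y ⟨hax.trans hxy, hyz.trans hzb⟩)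
      _ ≤ R * ∫ u in x..y, φ u :=
          mul_le_mul_of_nonneg_left (hlower hax hxy (hyz.trans hzb) fun u hu =>
            hleft u ⟨hax.trans_lt hu.1, hu.2.trans_le (hyz.trans hzb)⟩ hu.2.le) hR
      _ ≤ (∫ u in y..z, φ u) + R * ∫ u in x..y, φ u := le_add_of_nonneg_left hIyz

theorem sum_mul_le_one_add_mul_integral_of_quasiconvexOn {t : ℕ → ℝ} {i k : ℕ} {R : ℝ}
    (hφ : QuasiconvexOn ℝ (Set.Ioo (t i) (t k)) φ) (hφ0 : ∀ u ∈ Set.Icc (t i) (t k), 0 ≤ φ u)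
    (hint : IntervalIntegrable φ volume (t i) (t k)) (hik : i ≤ k)
    (ht : MonotoneOn t (Set.Icc i k)) (hR : 0 ≤ R)
    (hratio : ∀ j, i ≤ j → j + 2 ≤ k → t (j + 2) - t (j + 1) ≤ R * (t (j + 1) - t j)) :
    ∑ j ∈ Finset.Ioo i k, (t (j + 1) - t j) * φ (t j) ≤ (1 + R) * ∫ u in t i..t k, φ u := by
  have hmem : ∀ {j}, i ≤ j → j ≤ k → t j ∈ Set.Icc (t i) (t k) := fun hij hjk =>
    ⟨ht ⟨le_rfl, hik⟩ ⟨hij, hjk⟩ hij, ht ⟨hij, hjk⟩ ⟨hik, le_rfl⟩ hjk⟩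
  have hstep : ∀ {j}, i ≤ j → j < k → t j ≤ t (j + 1) := fun {j} hij hjk =>
    ht ⟨hij, hjk.le⟩ ⟨hij.trans (Nat.le_succ j), hjk⟩ (Nat.le_succ j)
  set I : ℕ → ℝ := fun j => ∫ u in t j..t (j + 1), φ u with hI
  have hI0 : ∀ j ∈ Finset.Ico i k, 0 ≤ I j := fun j hj => by
    rw [Finset.mem_Ico] at hj
    exact intervalIntegral.integral_nonneg (hstep hj.1 hj.2)
      fun u hu => hφ0 u ⟨(hmem hj.1 hj.2.le).1.trans hu.1, hu.2.trans (hmem (by omega) hj.2).2⟩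
  have hterm : ∀ j ∈ Finset.Ioo i k, (t (j + 1) - t j) * φ (t j) ≤ I j + R * I (j - 1) := by
    intro j hj
    rw [Finset.mem_Ioo] at hj
    obtain ⟨m, rfl⟩ : ∃ m, j = m + 1 := ⟨j - 1, by omega⟩
    simp only [hI, Nat.add_sub_cancel]
    exact sub_mul_le_integral_add_mul_integral_of_quasiconvexOn hφ hφ0 hint
      (hmem (by omega) (by omega)).1 (hstep (by omega) (by omega)) (hstep (by omega) hj.2)
      (hmem (by omega) hj.2).2 hR (hratio m (by omega) (by omega))
  have hshift : ∑ j ∈ Finset.Ioo i k, I (j - 1) ≤ ∑ j ∈ Finset.Ico i k, I j := by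
    rw [← Finset.sum_image (g := (· - 1)) fun x hx y hy (h : x - 1 = y - 1) => by
      simp only [Finset.coe_Ioo, Set.mem_Ioo] at hx hy; omega]
    refine Finset.sum_le_sum_of_subset_of_nonneg (fun m hm => ?_) fun j hj _ => hI0 j hj
    simp only [Finset.mem_image, Finset.mem_Ioo, Finset.mem_Ico] at hm ⊢
    omega
  have hdrop : ∑ j ∈ Finset.Ioo i k, I j ≤ ∑ j ∈ Finset.Ico i k, I j :=
    Finset.sum_le_sum_of_subset_of_nonneg Finset.Ioo_subset_Ico_self fun j hj _ => hI0 j hj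
  have htelescope : ∑ j ∈ Finset.Ico i k, I j = ∫ u in t i..t k, φ u :=
    intervalIntegral.sum_integral_adjacent_intervals_Ico hik fun j hj => hint.mono_set <| by
      rw [Set.uIcc_of_le (hstep hj.1 hj.2), Set.uIcc_of_le (hmem hik le_rfl).1]
      exact Set.Icc_subset_Icc (hmem hj.1 hj.2.le).1 (hmem (hj.1.trans (Nat.le_succ j)) hj.2).2
  calc ∑ j ∈ Finset.Ioo i k, (t (j + 1) - t j) * φ (t j)
      ≤ ∑ j ∈ Finset.Ioo i k, (I j + R * I (j - 1)) := Finset.sum_le_sum hterm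
    _ = ∑ j ∈ Finset.Ioo i k, I j + R * ∑ j ∈ Finset.Ioo i k, I (j - 1) := by
        rw [Finset.sum_add_distrib, Finset.mul_sum]
    _ ≤ (1 + R) * ∑ j ∈ Finset.Ico i k, I j := by
        linarith [mul_le_mul_of_nonneg_left hshift hR]
    _ = (1 + R) * ∫ u in t i..t k, φ u := by rw [htelescope]

end RiemannSum

noncomputable def betaKernel (α β a b u : ℝ) : ℝ := (b - u) ^ (α - 1) * (u - a) ^ (β - 1)

section BetaKernel

variable {α β a b : ℝ}

theorem betaKernel_nonneg {u : ℝ} (hu : u ∈ Set.Icc a b) : 0 ≤ betaKernel α β a b u :=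
  mul_nonneg (rpow_nonneg (sub_nonneg.2 hu.2) _) (rpow_nonneg (sub_nonneg.2 hu.1) _)

theorem div_rpow_mul_rpow_eq_mul_betaKernel {u : ℝ} (hu : u ∈ Set.Icc a b) (c : ℝ) :
    c / ((b - u) ^ (1 - α) * (u - a) ^ (1 - β)) = c * betaKernel α β a b u := by
  rw [betaKernel, div_eq_mul_inv, mul_inv, ← rpow_neg (sub_nonneg.2 hu.2),
    ← rpow_neg (sub_nonneg.2 hu.1), neg_sub, neg_sub]

theorem intervalIntegrable_betaKernel (hα : 0 < α) (hβ : 0 < β) (hab : a < b) :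
    IntervalIntegrable (betaKernel α β a b) volume a b := by
  obtain ⟨m, ham, hmb⟩ := exists_between hab
  refine IntervalIntegrable.trans (b := m) ?_ ?_
  · have hsing : IntervalIntegrable (fun u => (u - a) ^ (β - 1)) volume a m := by
      simpa using (intervalIntegral.intervalIntegrable_rpow' (a := 0) (b := m - a)
        (by linarith : -1 < β - 1)).comp_sub_right a
    refine hsing.continuousOn_mul <| ContinuousOn.rpow_const (by fun_prop) fun u hu => Or.inl ?_
    rw [Set.uIcc_of_le ham.le] at hu
    linarith [hu.2]
  · have hsing : IntervalIntegrable (fun u => (b - u) ^ (α - 1)) volume m b := by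
      simpa using (intervalIntegral.intervalIntegrable_rpow' (a := b - m) (b := 0)
        (by linarith : -1 < α - 1)).comp_sub_left b
    refine hsing.mul_continuousOn <| ContinuousOn.rpow_const (by fun_prop) fun u hu => Or.inl ?_
    rw [Set.uIcc_of_le hmb.le] at hu
    linarith [hu.1]

theorem integral_betaKernel (hab : a < b) :
    ∫ u in a..b, betaKernel α β a b u
      = (b - a) ^ (α + β - 1) * ∫ s in (0:ℝ)..1, betaKernel α β 0 1 s := by
  have hc : 0 < b - a := sub_pos.2 hab
  have hscale : ∀ s ∈ Set.uIcc (0:ℝ) 1, betaKernel α β a b ((b - a) * s + a)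
      = (b - a) ^ (α + β - 2) * betaKernel α β 0 1 s := fun s hs => by
    rw [Set.uIcc_of_le zero_le_one] at hs
    have h1 : b - ((b - a) * s + a) = (b - a) * (1 - s) := by ring
    have h2 : (b - a) * s + a - a = (b - a) * s := by ring
    rw [betaKernel, betaKernel, h1, h2, sub_zero, mul_rpow hc.le (by linarith [hs.2]),
      mul_rpow hc.le hs.1, show α + β - 2 = (α - 1) + (β - 1) by ring, rpow_add hc]
    ring
  calc ∫ u in a..b, betaKernel α β a b u
      = (b - a) * ∫ s in (0:ℝ)..1, betaKernel α β a b ((b - a) * s + a) := by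
        rw [intervalIntegral.integral_comp_mul_add _ hc.ne', smul_eq_mul,
          mul_inv_cancel_left₀ hc.ne', mul_zero, zero_add, mul_one, sub_add_cancel]
    _ = (b - a) * ((b - a) ^ (α + β - 2) * ∫ s in (0:ℝ)..1, betaKernel α β 0 1 s) := by
        rw [intervalIntegral.integral_congr hscale, intervalIntegral.integral_const_mul]
    _ = (b - a) ^ (α + β - 1) * ∫ s in (0:ℝ)..1, betaKernel α β 0 1 s := by
        rw [show α + β - 1 = (α + β - 2) + 1 by ring, rpow_add_one hc.ne']
        ring

theorem quasiconvexOn_betaKernel (hαβ : α < 1 ∨ β < 1) :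
    QuasiconvexOn ℝ (Set.Ioo a b) (betaKernel α β a b) := by
  set ψ : ℝ → ℝ := fun u => log (b - u) * (α - 1) + log (u - a) * (β - 1)
  have hexp : ∀ u ∈ Set.Ioo a b, betaKernel α β a b u = exp (ψ u) := fun u hu => by
    rw [betaKernel, rpow_def_of_pos (sub_pos.2 hu.2), rpow_def_of_pos (sub_pos.2 hu.1), exp_add]
  have hlog₁ : ConcaveOn ℝ (Set.Ioo a b) fun u => log (b - u) :=
    (strictConcaveOn_log_Ioi.concaveOn.comp_affineMap
      (AffineMap.const ℝ ℝ b - AffineMap.id ℝ ℝ)).subset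
      (fun u hu => by simpa using hu.2) (convex_Ioo a b)
  have hlog₂ : ConcaveOn ℝ (Set.Ioo a b) fun u => log (u - a) :=
    (strictConcaveOn_log_Ioi.concaveOn.comp_affineMap
      (AffineMap.id ℝ ℝ - AffineMap.const ℝ ℝ a)).subset
      (fun u hu => by simpa using hu.1) (convex_Ioo a b)
  have hanti₁ : AntitoneOn (fun u => log (b - u)) (Set.Ioo a b) := fun u hu v hv huv =>
    log_le_log (sub_pos.2 hv.2) (by linarith)
  have hmono₂ : MonotoneOn (fun u => log (u - a)) (Set.Ioo a b) := fun u hu v hv huv =>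
    log_le_log (sub_pos.2 hu.1) (by linarith)
  have hψ : QuasiconvexOn ℝ (Set.Ioo a b) ψ := by
    by_cases hα1 : α ≤ 1 <;> by_cases hβ1 : β ≤ 1
    · refine (((hlog₁.smul (sub_nonneg.2 hα1)).neg.add
        (hlog₂.smul (sub_nonneg.2 hβ1)).neg).congr fun u _ => ?_).quasiconvexOn
      simp only [ψ, Pi.add_apply, Pi.neg_apply, smul_eq_mul]
      ring
    · refine MonotoneOn.quasiconvexOn (fun u hu v hv huv => ?_) (convex_Ioo a b)
      exact add_le_add (mul_le_mul_of_nonpos_right (hanti₁ hu hv huv) (by linarith))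
        (mul_le_mul_of_nonneg_right (hmono₂ hu hv huv) (by linarith))
    · refine AntitoneOn.quasiconvexOn (fun u hu v hv huv => ?_) (convex_Ioo a b)
      exact add_le_add (mul_le_mul_of_nonneg_right (hanti₁ hu hv huv) (by linarith))
        (mul_le_mul_of_nonpos_right (hmono₂ hu hv huv) (by linarith))
    · rcases hαβ with h | h <;> linarith
  intro r
  convert (hψ.monotone_comp exp_monotone) r using 1
  ext u
  exact and_congr_right fun hu => by rw [hexp u hu, Function.comp_apply]

end BetaKernel

theorem singular_double_sum_beta_bound_general (N : ℕ) (Rπ : ℝ) (t : ℕ → ℝ) (α β : ℝ)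
    (hmono : ∀ j, j < N → t j < t (j + 1))
    (hR : 1 ≤ Rπ)
    (hratio : ∀ j, j + 2 ≤ N → t (j + 2) - t (j + 1) ≤ Rπ * (t (j + 1) - t j))
    (hα : 0 < α) (hβ : 0 < β) (hαβ : α < 1 ∨ β < 1)
    (i k : ℕ) (hik : i < k) (hkN : k ≤ N) :
    ∑ j ∈ Finset.Ioo i k, (t (j + 1) - t j) /
        ((t k - t j) ^ (1 - α) * (t j - t i) ^ (1 - β))
      ≤ ((1 + Rπ) * ∫ s in (0:ℝ)..1, (1 - s) ^ (α - 1) * s ^ (β - 1)) *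
        (t k - t i) ^ (α + β - 1) := by
  have ht : StrictMonoOn t (Set.Icc i k) := strictMonoOn_of_lt_add_one Set.ordConnected_Icc
    fun j _ _ hj => hmono j (Nat.lt_of_succ_le (hj.2.trans hkN))
  have hab : t i < t k := ht ⟨le_rfl, hik.le⟩ ⟨hik.le, le_rfl⟩ hik
  calc ∑ j ∈ Finset.Ioo i k, (t (j + 1) - t j) / ((t k - t j) ^ (1 - α) * (t j - t i) ^ (1 - β))
      = ∑ j ∈ Finset.Ioo i k, (t (j + 1) - t j) * betaKernel α β (t i) (t k) (t j) := by
        refine Finset.sum_congr rfl fun j hj => div_rpow_mul_rpow_eq_mul_betaKernel ?_ _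
        rw [Finset.mem_Ioo] at hj
        exact ⟨(ht ⟨le_rfl, hik.le⟩ ⟨hj.1.le, hj.2.le⟩ hj.1).le,
          (ht ⟨hj.1.le, hj.2.le⟩ ⟨hik.le, le_rfl⟩ hj.2).le⟩
    _ ≤ (1 + Rπ) * ∫ u in t i..t k, betaKernel α β (t i) (t k) u :=
        sum_mul_le_one_add_mul_integral_of_quasiconvexOn (quasiconvexOn_betaKernel hαβ)
          (fun _ hu => betaKernel_nonneg hu) (intervalIntegrable_betaKernel hα hβ hab) hik.le
          ht.monotoneOn (by linarith) fun j _ hj => hratio j (hj.trans hkN)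
    _ = ((1 + Rπ) * ∫ s in (0:ℝ)..1, (1 - s) ^ (α - 1) * s ^ (β - 1)) *
        (t k - t i) ^ (α + β - 1) := by
        rw [integral_betaKernel hab]
        simp only [betaKernel, sub_zero]
        ring

theorem singular_double_sum_beta_bound (N : ℕ) (T Rπ : ℝ) (t : ℕ → ℝ) (α β : ℝ)
    (hT : 0 < T) (ht0 : t 0 = 0) (htN : t N = T)
    (hmono : ∀ j, j < N → t j < t (j + 1))
    (hR : 1 ≤ Rπ)
    (hratio : ∀ j, j + 2 ≤ N → t (j + 2) - t (j + 1) ≤ Rπ * (t (j + 1) - t j))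
    (hα : 0 < α) (hβ : 0 < β) (hαβ : α < 1 ∨ β < 1)
    (i k : ℕ) (hik : i < k) (hkN : k ≤ N) :
    ∑ j ∈ Finset.Ioo i k, (t (j + 1) - t j) /
        ((t k - t j) ^ (1 - α) * (t j - t i) ^ (1 - β))
      ≤ ((1 + Rπ) * ∫ s in (0:ℝ)..1, (1 - s) ^ (α - 1) * s ^ (β - 1)) *
        (t k - t i) ^ (α + β - 1) :=
  singular_double_sum_beta_bound_general N Rπ t α β hmono hR hratio hα hβ hαβ i k hik hkN
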